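/- For any graph G and any edge e of G, the Staller-start game domination number satisfies |γ_g'(G) − γ_g'(G−e)| ≤ 2. -/

import Mathlib

open Classical

noncomputable section

namespace DomGame

variable {V : Type*} [Fintype V]

/-- Closed neighborhood of `v` as a `Finset`. -/
noncomputable def N (G : SimpleGraph V) (v : V) : Finset V :=
  Finset.univ.filter (fun u => G.Adj v u ∨ u = v)

/-- Legal moves given the set `S` of already dominated vertices. -/
noncomputable def moves (G : SimpleGraph V) (S : Finset V) : Finset V :=
  Finset.univ.filter (fun v => ¬ N G v ⊆ S)

lemma card_lt {G : SimpleGraph V} {S : Finset V} (v : V) (hv : v ∈ moves G S) :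
    (Finset.univ \ (S ∪ N G v)).card < (Finset.univ \ S).card := by
  simp only [moves, Finset.mem_filter] at hv
  obtain ⟨u, hu, hus⟩ := Finset.not_subset.mp hv.2
  apply Finset.card_lt_card
  refine ⟨Finset.sdiff_subset_sdiff (le_refl _) Finset.subset_union_left, ?_⟩
  intro hsub
  have := hsub (Finset.mem_sdiff.mpr ⟨Finset.mem_univ u, hus⟩)
  rw [Finset.mem_sdiff, Finset.mem_union] at this
  exact this.2 (Or.inr hu)

mutual
/-- Number of moves with optimal play when it is Dominator's turn and
`S` is the set of already dominated vertices. -/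
noncomputable def gameD (G : SimpleGraph V) (S : Finset V) : ℕ :=
  if h : (moves G S).Nonempty then
    1 + (moves G S).attach.inf' (by simpa using h)
      (fun v => gameS G (S ∪ N G v.1))
  else 0
termination_by (Finset.univ \ S).card
decreasing_by exact card_lt v.1 v.2

/-- Number of moves with optimal play when it is Staller's turn. -/
noncomputable def gameS (G : SimpleGraph V) (S : Finset V) : ℕ :=
  if h : (moves G S).Nonempty then
    1 + (moves G S).attach.sup' (by simpa using h)
      (fun v => gameD G (S ∪ N G v.1))
  else 0
termination_by (Finset.univ \ S).card
decreasing_by exact card_lt v.1 v.2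
end

/-- The (Dominator-start) game domination number. -/
noncomputable def gammaG (G : SimpleGraph V) : ℕ := gameD G ∅

/-- The Staller-start game domination number. -/
noncomputable def gammaG' (G : SimpleGraph V) : ℕ := gameS G ∅

end DomGame

/-!
Write `H = G - ab`. Closed neighbourhoods in `H` and `G` coincide except that
`N_G(a) = N_H(a) ∪ {b}` and `N_G(b) = N_H(b) ∪ {a}`; hence once `a` and `b` are dominated the two
games are identical. Each inequality is proved by letting the player it favours copy, in one
graph, an optimal move from the other. As long as the copied moves dominate the same vertices
the games stay synchronised; the first time they do not, the move was at `a` or `b`, so all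
that separates the two positions is the domination of `{a, b}`. From there the continuation
principle (more dominated vertices never lengthen the game) and the fact that Dominator can
dominate any chosen vertex with one move bound the discrepancy by two.
-/

namespace DomGame

open Finset

variable {V : Type*} [Fintype V]

section Game

variable {G H : SimpleGraph V} {S : Finset V} {v : V}

lemma self_mem_N (G : SimpleGraph V) (v : V) : v ∈ N G v := by simp [N]

lemma N_mono (hHG : H ≤ G) (v : V) : N H v ⊆ N G v := by
  intro u hu
  simp only [N, mem_filter, mem_univ, true_and] at hu ⊢
  exact hu.imp_left (@hHG v u)

lemma mem_moves_iff : v ∈ moves G S ↔ ¬ N G v ⊆ S := by simp [moves]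

lemma mem_moves_iff_union_ne : v ∈ moves G S ↔ S ∪ N G v ≠ S := by
  rw [mem_moves_iff, Ne, union_eq_left]

lemma moves_mono (hHG : H ≤ G) : moves H S ⊆ moves G S := fun _ hv =>
  mem_moves_iff.2 fun h => mem_moves_iff.1 hv ((N_mono hHG _).trans h)

lemma moves_nonempty_iff : (moves G S).Nonempty ↔ S ≠ univ := by
  constructor
  · rintro ⟨v, hv⟩ rfl
    exact mem_moves_iff.1 hv (subset_univ _)
  · intro hS
    obtain ⟨v, hv⟩ := exists_of_ssubset (ssubset_univ_iff.2 hS)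
    exact ⟨v, mem_moves_iff.2 fun h => hv.2 (h (self_mem_N G v))⟩

theorem moves_induction (G : SimpleGraph V) {P : Finset V → Prop}
    (step : ∀ S, (∀ v ∈ moves G S, P (S ∪ N G v)) → P S) (S : Finset V) : P S := by
  induction hn : (univ \ S).card using Nat.strong_induction_on generalizing S with
  | _ n ih => exact step S fun v hv => ih _ (hn ▸ card_lt v hv) _ rfl

lemma gameD_univ (G : SimpleGraph V) : gameD G univ = 0 := by
  rw [gameD, dif_neg (by simp [moves_nonempty_iff])]

lemma gameS_univ (G : SimpleGraph V) : gameS G univ = 0 := by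
  rw [gameS, dif_neg (by simp [moves_nonempty_iff])]

lemma gameD_le (hv : v ∈ moves G S) : gameD G S ≤ gameS G (S ∪ N G v) + 1 := by
  rw [gameD, dif_pos ⟨v, hv⟩, add_comm]
  exact Nat.add_le_add_right (inf'_le _ (mem_attach _ ⟨v, hv⟩)) 1

lemma le_gameS (hv : v ∈ moves G S) : gameD G (S ∪ N G v) + 1 ≤ gameS G S := by
  rw [gameS, dif_pos ⟨v, hv⟩, add_comm]
  exact Nat.add_le_add_left
    (le_sup' (fun w : moves G S => gameD G (S ∪ N G w.1)) (mem_attach _ ⟨v, hv⟩)) 1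

lemma exists_gameD_eq (hS : S ≠ univ) :
    ∃ v ∈ moves G S, gameD G S = gameS G (S ∪ N G v) + 1 := by
  have h := moves_nonempty_iff (G := G) |>.2 hS
  rw [gameD, dif_pos h]
  obtain ⟨w, -, hw⟩ := exists_mem_eq_inf' (attach_nonempty_iff.2 h)
    (fun w => gameS G (S ∪ N G w.1))
  exact ⟨w.1, w.2, by rw [hw, add_comm]⟩

lemma exists_gameS_eq (hS : S ≠ univ) :
    ∃ v ∈ moves G S, gameS G S = gameD G (S ∪ N G v) + 1 := by
  have h := moves_nonempty_iff (G := G) |>.2 hS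
  rw [gameS, dif_pos h]
  obtain ⟨w, -, hw⟩ := exists_mem_eq_sup' (attach_nonempty_iff.2 h)
    (fun w => gameD G (S ∪ N G w.1))
  exact ⟨w.1, w.2, by rw [hw, add_comm]⟩

theorem game_antitone (G : SimpleGraph V) :
    ∀ S T : Finset V, S ⊆ T → gameD G T ≤ gameD G S ∧ gameS G T ≤ gameS G S := by
  refine moves_induction G fun S ih T hST => ?_
  by_cases hT : T = univ
  · simp [hT, gameD_univ, gameS_univ]
  constructor
  · obtain ⟨v, hv, hSv⟩ := exists_gameD_eq (G := G) fun hS => hT (univ_subset_iff.1 (hS ▸ hST))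
    obtain ⟨w, hw, hvw⟩ : ∃ w ∈ moves G T, S ∪ N G v ⊆ T ∪ N G w := by
      by_cases hvT : v ∈ moves G T
      · exact ⟨v, hvT, union_subset_union hST subset_rfl⟩
      · obtain ⟨w, hw⟩ := moves_nonempty_iff.2 hT
        refine ⟨w, hw, union_subset (hST.trans subset_union_left) ?_⟩
        exact (not_not.1 (mt mem_moves_iff.2 hvT)).trans subset_union_left
    calc gameD G T ≤ gameS G (T ∪ N G w) + 1 := gameD_le hw
      _ ≤ gameS G (S ∪ N G v) + 1 := by gcongr; exact (ih v hv _ hvw).2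
      _ = gameD G S := hSv.symm
  · obtain ⟨v, hv, hTv⟩ := exists_gameS_eq (G := G) hT
    have hvS : v ∈ moves G S := mem_moves_iff.2 fun h => mem_moves_iff.1 hv (h.trans hST)
    calc gameS G T = gameD G (T ∪ N G v) + 1 := hTv
      _ ≤ gameD G (S ∪ N G v) + 1 := by
        gcongr; exact (ih v hvS _ (union_subset_union hST subset_rfl)).1
      _ ≤ gameS G S := le_gameS hvS

theorem gameD_antitone (G : SimpleGraph V) : Antitone (gameD G) :=
  fun S T h => (game_antitone G S T h).1

theorem gameS_antitone (G : SimpleGraph V) : Antitone (gameS G) :=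
  fun S T h => (game_antitone G S T h).2

lemma gameD_le_gameS_add_one (G : SimpleGraph V) (S : Finset V) : gameD G S ≤ gameS G S + 1 := by
  by_cases hS : S = univ
  · simp [hS, gameD_univ]
  obtain ⟨v, -, hv⟩ := exists_gameD_eq (G := G) hS
  rw [hv]
  gcongr
  exact gameS_antitone G subset_union_left

lemma gameS_le_gameD_add_one (G : SimpleGraph V) (S : Finset V) : gameS G S ≤ gameD G S + 1 := by
  by_cases hS : S = univ
  · simp [hS, gameS_univ]
  obtain ⟨v, -, hv⟩ := exists_gameS_eq (G := G) hS
  rw [hv]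
  gcongr
  exact gameD_antitone G subset_union_left

lemma gameD_le_gameS_insert_add_one (G : SimpleGraph V) (S : Finset V) (y : V) :
    gameD G S ≤ gameS G (insert y S) + 1 := by
  by_cases hy : y ∈ S
  · rw [insert_eq_of_mem hy]
    exact gameD_le_gameS_add_one G S
  · calc gameD G S ≤ gameS G (S ∪ N G y) + 1 :=
          gameD_le (mem_moves_iff.2 fun h => hy (h (self_mem_N G y)))
      _ ≤ gameS G (insert y S) + 1 := by
          gcongr
          exact gameS_antitone G
            (insert_subset (mem_union_right _ (self_mem_N G y)) subset_union_left)

lemma game_le_of_union_N_eq {G₁ G₂ : SimpleGraph V} {X : Finset V}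
    (h : ∀ v, X ∪ N G₁ v = X ∪ N G₂ v) :
    ∀ S, X ⊆ S → gameD G₁ S ≤ gameD G₂ S ∧ gameS G₁ S ≤ gameS G₂ S := by
  refine moves_induction G₁ fun S ih hXS => ?_
  have hN : ∀ v, S ∪ N G₁ v = S ∪ N G₂ v := fun v => by
    rw [← union_eq_left.2 hXS, union_assoc, union_assoc, h]
  have hmoves : ∀ v, v ∈ moves G₁ S ↔ v ∈ moves G₂ S := fun v => by
    simp only [mem_moves_iff_union_ne, hN]
  have ih' : ∀ v ∈ moves G₁ S,
      gameD G₁ (S ∪ N G₁ v) ≤ gameD G₂ (S ∪ N G₂ v) ∧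
        gameS G₁ (S ∪ N G₁ v) ≤ gameS G₂ (S ∪ N G₂ v) := fun v hv => by
    simpa only [hN v] using ih v hv (hXS.trans subset_union_left)
  by_cases hS : S = univ
  · simp [hS, gameD_univ, gameS_univ]
  constructor
  · obtain ⟨v, hv, hDv⟩ := exists_gameD_eq (G := G₂) hS
    have hv₁ := (hmoves v).2 hv
    calc gameD G₁ S ≤ gameS G₁ (S ∪ N G₁ v) + 1 := gameD_le hv₁
      _ ≤ gameS G₂ (S ∪ N G₂ v) + 1 := by gcongr; exact (ih' v hv₁).2
      _ = gameD G₂ S := hDv.symm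
  · obtain ⟨v, hv, hSv⟩ := exists_gameS_eq (G := G₁) hS
    calc gameS G₁ S = gameD G₁ (S ∪ N G₁ v) + 1 := hSv
      _ ≤ gameD G₂ (S ∪ N G₂ v) + 1 := by gcongr; exact (ih' v hv).1
      _ ≤ gameS G₂ S := le_gameS ((hmoves v).1 hv)

lemma game_eq_of_union_N_eq {G₁ G₂ : SimpleGraph V} {X : Finset V}
    (h : ∀ v, X ∪ N G₁ v = X ∪ N G₂ v) (hXS : X ⊆ S) :
    gameD G₁ S = gameD G₂ S ∧ gameS G₁ S = gameS G₂ S :=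
  have h₁ := game_le_of_union_N_eq h S hXS
  have h₂ := game_le_of_union_N_eq (fun v => (h v).symm) S hXS
  ⟨le_antisymm h₁.1 h₂.1, le_antisymm h₁.2 h₂.2⟩

end Game

section DeleteEdge

variable (G : SimpleGraph V) (a b : V) {S : Finset V}

lemma N_deleteEdges_eq_or (v : V) :
    N (G.deleteEdges {s(a, b)}) v = N G v ∨
      ((v = a ∨ v = b) ∧ N G v = N (G.deleteEdges {s(a, b)}) v ∪ {a, b}) := by
  by_cases h : N G v ⊆ N (G.deleteEdges {s(a, b)}) v
  · exact Or.inl (subset_antisymm (N_mono (G.deleteEdges_le _) v) h)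
  obtain ⟨u, hu, hu'⟩ := not_subset.1 h
  simp only [N, mem_filter, mem_univ, true_and, SimpleGraph.deleteEdges_adj,
    Set.mem_singleton_iff] at hu hu'
  have hvu : G.Adj v u ∧ s(v, u) = s(a, b) := by tauto
  have hvab : (v = a ∧ u = b) ∨ (v = b ∧ u = a) := Sym2.eq_iff.1 hvu.2
  refine Or.inr ⟨by tauto, ?_⟩
  ext x
  simp only [N, mem_filter, mem_univ, true_and, SimpleGraph.deleteEdges_adj,
    Set.mem_singleton_iff, mem_union, mem_insert, mem_singleton]
  rcases hvab with ⟨rfl, rfl⟩ | ⟨rfl, rfl⟩ <;> grind [Sym2.eq_iff]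

lemma union_N_deleteEdges_eq_or (S : Finset V) (v : V) :
    S ∪ N G v = S ∪ N (G.deleteEdges {s(a, b)}) v ∨
      ((a ∈ S ∪ N (G.deleteEdges {s(a, b)}) v ∨ b ∈ S ∪ N (G.deleteEdges {s(a, b)}) v) ∧
        S ∪ N G v = S ∪ N (G.deleteEdges {s(a, b)}) v ∪ {a, b}) := by
  rcases N_deleteEdges_eq_or G a b v with h | ⟨hv, h⟩
  · exact Or.inl (by rw [h])
  · refine Or.inr ⟨?_, by rw [h, union_assoc]⟩
    rcases hv with rfl | rfl
    · exact Or.inl (mem_union_right _ (self_mem_N _ _))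
    · exact Or.inr (mem_union_right _ (self_mem_N _ _))

lemma game_deleteEdges_eq (hS : {a, b} ⊆ S) :
    gameD (G.deleteEdges {s(a, b)}) S = gameD G S ∧
      gameS (G.deleteEdges {s(a, b)}) S = gameS G S := by
  refine game_eq_of_union_N_eq (fun v => ?_) hS
  rcases N_deleteEdges_eq_or G a b v with h | ⟨-, h⟩
  · rw [h]
  · rw [h, ← union_assoc, union_comm _ (N _ v), union_assoc, union_self, union_comm]

lemma gameD_deleteEdges_le_gameS_union_pair (h : a ∈ S ∨ b ∈ S) :
    gameD (G.deleteEdges {s(a, b)}) S ≤ gameS G (S ∪ {a, b}) + 1 := by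
  obtain ⟨y, hy⟩ : ∃ y, S ∪ {a, b} = insert y S := by
    rcases h with h | h
    · exact ⟨b, by ext; simp only [mem_union, mem_insert, mem_singleton]; grind⟩
    · exact ⟨a, by ext; simp only [mem_union, mem_insert, mem_singleton]; grind⟩
  calc gameD (G.deleteEdges {s(a, b)}) S
      ≤ gameS (G.deleteEdges {s(a, b)}) (insert y S) + 1 := gameD_le_gameS_insert_add_one _ _ _
    _ = gameS G (S ∪ {a, b}) + 1 := by
      rw [← hy, (game_deleteEdges_eq G a b subset_union_right).2]

lemma gameS_deleteEdges_le_gameS_union_pair (h : a ∈ S ∨ b ∈ S) :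
    gameS (G.deleteEdges {s(a, b)}) S ≤ gameS G (S ∪ {a, b}) + 2 := by
  by_cases hS : S = univ
  · simp [hS, gameS_univ]
  obtain ⟨v, -, hv⟩ := exists_gameS_eq (G := G.deleteEdges {s(a, b)}) hS
  have hS₁ : a ∈ S ∪ N (G.deleteEdges {s(a, b)}) v ∨ b ∈ S ∪ N (G.deleteEdges {s(a, b)}) v :=
    h.imp (mem_union_left _) (mem_union_left _)
  calc gameS (G.deleteEdges {s(a, b)}) S
      = gameD (G.deleteEdges {s(a, b)}) (S ∪ N (G.deleteEdges {s(a, b)}) v) + 1 := hv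
    _ ≤ gameS G (S ∪ N (G.deleteEdges {s(a, b)}) v ∪ {a, b}) + 2 := by
      linarith [gameD_deleteEdges_le_gameS_union_pair G a b hS₁]
    _ ≤ gameS G (S ∪ {a, b}) + 2 := by
      gcongr; exact gameS_antitone G (union_subset_union subset_union_left subset_rfl)

theorem game_deleteEdges_le_add_two :
    ∀ S, gameD (G.deleteEdges {s(a, b)}) S ≤ gameD G S + 2 ∧
      gameS (G.deleteEdges {s(a, b)}) S ≤ gameS G S + 2 := by
  refine moves_induction (G.deleteEdges {s(a, b)}) fun S ih => ?_
  by_cases hS : S = univ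
  · simp [hS, gameD_univ, gameS_univ]
  constructor
  · obtain ⟨w, hw, hGw⟩ := exists_gameD_eq (G := G) hS
    rcases union_N_deleteEdges_eq_or G a b S w with hN | ⟨hab, hN⟩
    · have hwH : w ∈ moves (G.deleteEdges {s(a, b)}) S := by
        rwa [mem_moves_iff_union_ne, ← hN, ← mem_moves_iff_union_ne]
      rw [hN] at hGw
      linarith [gameD_le hwH, (ih w hwH).2]
    · rw [hN] at hGw
      by_cases hwH : w ∈ moves (G.deleteEdges {s(a, b)}) S
      · linarith [gameD_le hwH, gameS_deleteEdges_le_gameS_union_pair G a b hab]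
      · rw [not_not.1 (mt mem_moves_iff_union_ne.2 hwH)] at hab hGw
        linarith [gameD_deleteEdges_le_gameS_union_pair G a b hab]
  · obtain ⟨v, hv, hHv⟩ := exists_gameS_eq (G := G.deleteEdges {s(a, b)}) hS
    have hvG := moves_mono (G.deleteEdges_le _) hv
    have hS₁ : gameD (G.deleteEdges {s(a, b)}) (S ∪ N (G.deleteEdges {s(a, b)}) v) ≤
        gameD G (S ∪ N G v) + 2 := by
      rcases union_N_deleteEdges_eq_or G a b S v with hN | ⟨hab, hN⟩
      · simpa only [hN] using (ih v hv).1
      · rw [hN]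
        linarith [gameD_deleteEdges_le_gameS_union_pair G a b hab,
          gameS_le_gameD_add_one G (S ∪ N (G.deleteEdges {s(a, b)}) v ∪ {a, b})]
    linarith [le_gameS hvG]

theorem game_le_deleteEdges_add_two :
    ∀ S, gameD G S ≤ gameD (G.deleteEdges {s(a, b)}) S + 2 ∧
      gameS G S ≤ gameS (G.deleteEdges {s(a, b)}) S + 2 := by
  refine moves_induction G fun S ih => ?_
  by_cases hS : S = univ
  · simp [hS, gameD_univ, gameS_univ]
  constructor
  · obtain ⟨w, hw, hHw⟩ := exists_gameD_eq (G := G.deleteEdges {s(a, b)}) hS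
    have hwG := moves_mono (G.deleteEdges_le _) hw
    have hS₁ : gameS G (S ∪ N G w) ≤
        gameS (G.deleteEdges {s(a, b)}) (S ∪ N (G.deleteEdges {s(a, b)}) w) + 2 := by
      rcases union_N_deleteEdges_eq_or G a b S w with hN | ⟨-, hN⟩
      · simpa only [hN] using (ih w hwG).2
      · rw [hN, ← (game_deleteEdges_eq G a b subset_union_right).2]
        linarith [gameS_antitone (G.deleteEdges {s(a, b)})
          (subset_union_left : S ∪ N (G.deleteEdges {s(a, b)}) w ⊆ _ ∪ {a, b})]
    linarith [gameD_le hwG]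
  · obtain ⟨v, hv, hGv⟩ := exists_gameS_eq (G := G) hS
    rcases union_N_deleteEdges_eq_or G a b S v with hN | ⟨-, hN⟩
    · have hvH : v ∈ moves (G.deleteEdges {s(a, b)}) S := by
        rwa [mem_moves_iff_union_ne, ← hN, ← mem_moves_iff_union_ne]
      have hS₁ := (ih v hv).1
      rw [hN] at hS₁ hGv
      linarith [le_gameS hvH]
    · have hab : {a, b} ⊆ S ∪ N G v := hN ▸ subset_union_right
      calc gameS G S = gameD G (S ∪ N G v) + 1 := hGv
        _ = gameD (G.deleteEdges {s(a, b)}) (S ∪ N G v) + 1 := by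
          rw [(game_deleteEdges_eq G a b hab).1]
        _ ≤ gameD (G.deleteEdges {s(a, b)}) S + 1 := by
          gcongr; exact gameD_antitone _ subset_union_left
        _ ≤ gameS (G.deleteEdges {s(a, b)}) S + 2 := by
          linarith [gameD_le_gameS_add_one (G.deleteEdges {s(a, b)}) S]

end DeleteEdge

end DomGame

open DomGame in
/-- For any graph `G` and any edge `e` of `G`,
`|γ_g'(G) − γ_g'(G−e)| ≤ 2`. -/
theorem edge_removal_gameS {V : Type*} [Fintype V] (G : SimpleGraph V)
    (e : Sym2 V) (he : e ∈ G.edgeSet) :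
    |(gammaG' G : ℤ) - gammaG' (G.deleteEdges {e})| ≤ 2 := by
  induction e using Sym2.ind with
  | _ a b =>
    have h₁ := (game_deleteEdges_le_add_two G a b ∅).2
    have h₂ := (game_le_deleteEdges_add_two G a b ∅).2
    unfold gammaG'
    rw [abs_le]
    constructor <;> omega
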